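/- arXiv:2306.04525 — 3 statements merged into one kernel-verified Lean document; each statement's English description precedes it below -/
import Mathlib

section
/- Let (X_t)_{t≥0} be a stochastic process with values in the natural numbers, adapted to a filtration (𝓕_t), let B, α be natural numbers with B + 1 < α, and let q ∈ (0,1]. Suppose that almost surely X_{t+1} ≤ X_t + 1 for every t, and that for every t the conditional probability P(X_{t+1} ≤ B + 1 | 𝓕_t) is at least q almost surely. If X_0 ≤ B almost surely, then for every natural number T, the probability that there exists some t ≤ T with X_t ≥ α is at most T · (1 − q)^(α − B − 1). -/
/-!
Call a time `t` shrinking if `X t ≤ B + 1`. Since `X` climbs by at most one per step and starts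
at most at `B`, reaching level `α` by time `T` forces `k = α - B - 1` consecutive non-shrinking
steps `s + 1, …, s + k` right after the last shrinking time `s < T` before it. At every step the
conditional probability of shrinking is at least `q`, so a prescribed run of `k` non-shrinking
steps has probability at most `(1 - q) ^ k`; a union bound over the `T` possible starting times
`s` finishes the proof.
-/

open MeasureTheory

section Pathwise

variable {x : ℕ → ℕ}

theorem apply_add_le_of_le_succ (hstep : ∀ n, x (n + 1) ≤ x n + 1) (a d : ℕ) :
    x (a + d) ≤ x a + d := by
  induction d with
  | zero => rfl
  | succ d ih => exact (hstep (a + d)).trans (by omega)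

/-- The run starts at the last time `s ≤ t` with `x s ≤ L`. -/
theorem exists_run_gt_of_add_le {L k t : ℕ} (h0 : x 0 ≤ L)
    (hstep : ∀ n, x (n + 1) ≤ x n + 1) (ht : L + k ≤ x t) :
    ∃ s, s + k ≤ t ∧ ∀ i < k, L < x (s + i + 1) := by
  set s := Nat.findGreatest (fun r => x r ≤ L) t
  have hs : x s ≤ L := Nat.findGreatest_spec (P := fun r => x r ≤ L) (Nat.zero_le t) h0
  have hst : s ≤ t := Nat.findGreatest_le t
  have hclimb : x t ≤ x s + (t - s) := by
    simpa only [Nat.add_sub_cancel' hst] using apply_add_le_of_le_succ hstep s (t - s)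
  refine ⟨s, by omega, fun i hi => not_le.mp ?_⟩
  exact Nat.findGreatest_is_greatest (P := fun r => x r ≤ L) (n := t) (by omega) (by omega)

end Pathwise

section Probability

variable {Ω : Type*} {m0 : MeasurableSpace Ω} {μ : Measure Ω}

theorem measure_sdiff_le_of_le_condExp_indicator [IsFiniteMeasure μ] {m : MeasurableSpace Ω}
    (hm : m ≤ m0) {A S : Set Ω} (hA : MeasurableSet[m0] A) (hS : MeasurableSet[m] S) {q : ℝ}
    (hq : ∀ᵐ ω ∂μ, q ≤ μ[A.indicator (fun _ => (1 : ℝ)) | m] ω) :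
    μ (S \ A) ≤ ENNReal.ofReal (1 - q) * μ S := by
  have hinter : q * μ.real S ≤ μ.real (S ∩ A) :=
    calc q * μ.real S = ∫ _ in S, q ∂μ := by rw [setIntegral_const, smul_eq_mul, mul_comm]
      _ ≤ ∫ ω in S, μ[A.indicator (fun _ => (1 : ℝ)) | m] ω ∂μ :=
        setIntegral_mono_ae (integrable_const q).integrableOn integrable_condExp.integrableOn hq
      _ = ∫ ω in S, A.indicator 1 ω ∂μ :=
        setIntegral_condExp hm ((integrable_const 1).indicator hA) hS
      _ = μ.real (S ∩ A) := by
        rw [integral_indicator_one hA, measureReal_restrict_apply hA, Set.inter_comm]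
  have hsdiff : μ.real (S \ A) ≤ (1 - q) * μ.real S := by
    linarith [measureReal_inter_add_sdiff (μ := μ) (s := S) hA]
  calc μ (S \ A) = ENNReal.ofReal (μ.real (S \ A)) :=
        (ofReal_measureReal (measure_ne_top _ _)).symm
    _ ≤ ENNReal.ofReal ((1 - q) * μ.real S) := ENNReal.ofReal_le_ofReal hsdiff
    _ = ENNReal.ofReal (1 - q) * μ S := by
      rw [ENNReal.ofReal_mul' measureReal_nonneg, ofReal_measureReal]

theorem measure_biInter_compl_le_pow [IsProbabilityMeasure μ] (ℱ : Filtration ℕ m0)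
    {A : ℕ → Set Ω} (hA : ∀ t, MeasurableSet[ℱ t] (A t)) {q : ℝ}
    (hq : ∀ t, ∀ᵐ ω ∂μ, q ≤ μ[(A (t + 1)).indicator (fun _ => (1 : ℝ)) | ℱ t] ω)
    (s j : ℕ) :
    μ (⋂ i < j, (A (s + i + 1))ᶜ) ≤ ENNReal.ofReal (1 - q) ^ j := by
  induction j with
  | zero => simp
  | succ j ih =>
    have hmeas : MeasurableSet[ℱ (s + j)] (⋂ i < j, (A (s + i + 1))ᶜ) :=
      .iInter fun i => .iInter fun hi => (ℱ.mono (by omega) _ (hA (s + i + 1))).compl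
    rw [Set.biInter_lt_succ, ← Set.sdiff_eq, pow_succ, mul_comm]
    calc μ ((⋂ i < j, (A (s + i + 1))ᶜ) \ A (s + j + 1))
        ≤ ENNReal.ofReal (1 - q) * μ (⋂ i < j, (A (s + i + 1))ᶜ) :=
          measure_sdiff_le_of_le_condExp_indicator (ℱ.le _) (ℱ.le _ _ (hA (s + j + 1))) hmeas
            (hq (s + j))
      _ ≤ ENNReal.ofReal (1 - q) * ENNReal.ofReal (1 - q) ^ j := by gcongr

end Probability

theorem prob_reach_high_level_le_general {Ω : Type*} {m0 : MeasurableSpace Ω}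
    (μ : Measure Ω) [IsProbabilityMeasure μ]
    (ℱ : Filtration ℕ m0) (X : ℕ → Ω → ℕ)
    (B α : ℕ) (hBα : B + 1 < α) (q : ℝ) (hq1 : q ≤ 1)
    (hadapt : ∀ t, Measurable[ℱ t] (X t))
    (hstep : ∀ t, ∀ᵐ ω ∂μ, X (t + 1) ω ≤ X t ω + 1)
    (hshrink : ∀ t, ∀ᵐ ω ∂μ,
      q ≤ (μ[Set.indicator {ω' | X (t + 1) ω' ≤ B + 1} (fun _ => (1 : ℝ)) | ℱ t]) ω)
    (h0 : ∀ᵐ ω ∂μ, X 0 ω ≤ B) (T : ℕ) :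
    μ {ω | ∃ t ≤ T, α ≤ X t ω} ≤
      ENNReal.ofReal ((T : ℝ) * (1 - q) ^ (α - B - 1)) := by
  set k := α - B - 1
  set A : ℕ → Set Ω := fun t => {ω | X t ω ≤ B + 1}
  set run : ℕ → Set Ω := fun s => ⋂ i < k, (A (s + i + 1))ᶜ
  have hcover : {ω | ∃ t ≤ T, α ≤ X t ω} ≤ᵐ[μ] ⋃ s ∈ Finset.range T, run s := by
    filter_upwards [h0, ae_all_iff.mpr hstep] with ω hω0 hωstep ⟨t, htT, hαt⟩
    obtain ⟨s, hst, hrun⟩ := exists_run_gt_of_add_le (x := (X · ω)) (L := B + 1) (k := k)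
      (t := t) (by omega) hωstep (by omega)
    show ω ∈ ⋃ s ∈ Finset.range T, run s
    simp only [run, Set.mem_iUnion, Set.mem_iInter, Set.mem_compl_iff, Finset.mem_range]
    exact ⟨s, by omega, fun i hi => not_le.mpr (hrun i hi)⟩
  have hrun : ∀ s, μ (run s) ≤ ENNReal.ofReal (1 - q) ^ k := fun s =>
    measure_biInter_compl_le_pow ℱ (fun t => measurableSet_le (hadapt t) measurable_const)
      hshrink s k
  calc μ {ω | ∃ t ≤ T, α ≤ X t ω}
      ≤ μ (⋃ s ∈ Finset.range T, run s) := measure_mono_ae hcover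
    _ ≤ ∑ s ∈ Finset.range T, μ (run s) := measure_biUnion_finset_le _ _
    _ ≤ ∑ _s ∈ Finset.range T, ENNReal.ofReal (1 - q) ^ k :=
      Finset.sum_le_sum fun s _ => hrun s
    _ = ENNReal.ofReal ((T : ℝ) * (1 - q) ^ k) := by
      rw [Finset.sum_const, Finset.card_range, nsmul_eq_mul,
        ENNReal.ofReal_mul (Nat.cast_nonneg T), ENNReal.ofReal_natCast,
        ENNReal.ofReal_pow (by linarith)]

/-- Let `(X_t)` be an ℕ-valued process adapted to a filtration `ℱ`, increasing by at most 1
per step, such that at every step the conditional probability (given `ℱ t`) of dropping to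
a value at most `B + 1` is at least `q`. If `X_0 ≤ B` a.s., then the probability that
`X_t ≥ α` for some `t ≤ T` is at most `T (1 - q)^(α - B - 1)`. -/
theorem prob_reach_high_level_le {Ω : Type*} {m0 : MeasurableSpace Ω}
    (μ : Measure Ω) [IsProbabilityMeasure μ]
    (ℱ : Filtration ℕ m0) (X : ℕ → Ω → ℕ)
    (B α : ℕ) (hBα : B + 1 < α) (q : ℝ) (hq0 : 0 < q) (hq1 : q ≤ 1)
    (hadapt : ∀ t, Measurable[ℱ t] (X t))
    (hstep : ∀ t, ∀ᵐ ω ∂μ, X (t + 1) ω ≤ X t ω + 1)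
    (hshrink : ∀ t, ∀ᵐ ω ∂μ,
      q ≤ (μ[Set.indicator {ω' | X (t + 1) ω' ≤ B + 1} (fun _ => (1 : ℝ)) | ℱ t]) ω)
    (h0 : ∀ᵐ ω ∂μ, X 0 ω ≤ B) (T : ℕ) :
    μ {ω | ∃ t ≤ T, α ≤ X t ω} ≤
      ENNReal.ofReal ((T : ℝ) * (1 - q) ^ (α - B - 1)) :=
  prob_reach_high_level_le_general μ ℱ X B α hBα q hq1 hadapt hstep hshrink h0 T
end

section
/- Let n ≥ 1 and let F := {1^i 0^{n−i} : 0 ≤ i ≤ n} ⊆ {0,1}^n be the set of bit strings consisting of a prefix of i ones followed by n−i zeros. Let x ∈ {0,1}^n and let y be the random bit string obtained from x by standard bit mutation with rate 1/n, i.e., each bit of x is flipped independently with probability 1/n. Then P(y ∈ F) ≤ 1/e + 3/n if x ∈ F, and P(y ∈ F) ≤ 3/n if x ∉ F. -/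
/-- `onesZeros n i` is the bit string `1^i 0^(n-i)`. -/
def onesZeros (n i : ℕ) : Fin n → Bool := fun k => decide ((k : ℕ) < i)

/-- The Pareto set of LOTZ: all bit strings `1^i 0^(n-i)` for `0 ≤ i ≤ n`. -/
def paretoSet (n : ℕ) : Finset (Fin n → Bool) := (Finset.range (n + 1)).image (onesZeros n)

/-- Standard bit mutation with rate `1/n`: each bit of `x` is flipped independently with
probability `1/n`; `mutProb n x z` is the probability that the result equals `z`. -/
noncomputable def mutProb (n : ℕ) (x z : Fin n → Bool) : ℝ :=
  ∏ i : Fin n, if z i = x i then 1 - 1 / (n : ℝ) else 1 / (n : ℝ)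

/-!
If `z` is at Hamming distance `d` from `x`, mutation produces `z` with probability
`(1/n)^d (1 - 1/n)^(n-d)`. The Pareto-optimal strings `1^i 0^(n-i)` and `1^j 0^(n-j)` are
`|i - j|` apart, so by the triangle inequality at most `2d + 1` of them lie at distance `d` from
`x`; at most one lies at distance `n` (the complement of `x`), and there are at most `n + 1` in
all. Hence at most `3 * (n-1).choose k` lie at distance `k + 1`, and by the binomial theorem the
strings `z ≠ x` contribute at most `3 * (1/n) * (1/n + (1 - 1/n))^(n-1) = 3/n`. The string `x`
itself, if Pareto-optimal, contributes `(1 - 1/n)^n ≤ 1/e`.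
-/

open Finset

theorem Nat.le_choose_of_pos_of_lt {m k : ℕ} (hk : 0 < k) (hkm : k < m) : m ≤ m.choose k := by
  induction m generalizing k with
  | zero => omega
  | succ m ih =>
    obtain ⟨k, rfl⟩ : ∃ k', k = k' + 1 := ⟨k - 1, by omega⟩
    rw [Nat.choose_succ_succ']
    rcases Nat.eq_zero_or_pos k with rfl | hk0
    · simp
    · have := ih hk0 (by omega)
      have := Nat.choose_pos (show k + 1 ≤ m by omega)
      omega

theorem Finset.card_le_succ_of_forall_le_add {s : Finset ℕ} {k : ℕ}
    (h : ∀ a ∈ s, ∀ b ∈ s, b ≤ a + k) : #s ≤ k + 1 := by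
  rcases s.eq_empty_or_nonempty with rfl | hs
  · simp
  · calc #s ≤ #(Icc (s.min' hs) (s.min' hs + k)) :=
          card_le_card fun b hb => mem_Icc.2 ⟨s.min'_le b hb, h _ (s.min'_mem hs) b hb⟩
      _ = k + 1 := by rw [Nat.card_Icc]; omega

theorem sum_choose_mul_pow_succ {R : Type*} [CommSemiring R] (q p : R) (m : ℕ) :
    ∑ k ∈ range (m + 1), (m.choose k : R) * (q ^ (k + 1) * p ^ (m - k)) = q * (q + p) ^ m := by
  rw [add_pow, mul_sum]
  exact sum_congr rfl fun k _ => by ring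

section Hamming

variable {ι : Type*} [Fintype ι]

theorem prod_ite_eq_pow_hammingDist {β M : Type*} [DecidableEq β] [CommMonoid M]
    (x z : ι → β) (a b : M) :
    ∏ i, (if z i = x i then a else b) =
      b ^ hammingDist x z * a ^ (Fintype.card ι - hammingDist x z) := by
  have hsplit := card_filter_add_card_filter_not (s := univ) (fun i => x i ≠ z i)
  rw [card_univ] at hsplit
  rw [prod_ite, prod_const, prod_const, mul_comm, hammingDist, ← hsplit, Nat.add_sub_cancel_left]
  simp only [ne_eq, not_not, eq_comm]

theorem card_filter_hammingDist_eq_zero {β : Type*} [DecidableEq β]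
    (s : Finset (ι → β)) (x : ι → β) :
    #{z ∈ s | hammingDist x z = 0} = if x ∈ s then 1 else 0 := by
  simp only [hammingDist_eq_zero, filter_eq]
  split_ifs <;> rfl

theorem card_filter_hammingDist_eq_card_le_one (s : Finset (ι → Bool))
    (x : ι → Bool) : #{z ∈ s | hammingDist x z = Fintype.card ι} ≤ 1 := by
  have hcompl : ∀ z, hammingDist x z = Fintype.card ι → z = fun i => !x i := by
    intro z hz
    have hne := card_filter_eq_iff.1 hz
    funext i
    exact Bool.eq_not_iff.2 (Ne.symm (hne i (mem_univ i)))
  refine card_le_one.2 fun y hy z hz => ?_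
  rw [hcompl y (mem_filter.1 hy).2, hcompl z (mem_filter.1 hz).2]

end Hamming

theorem hammingDist_onesZeros {n i j : ℕ} (hij : i ≤ j) (hjn : j ≤ n) :
    hammingDist (onesZeros n i) (onesZeros n j) = j - i := by
  have hfilter : univ.filter (fun k : Fin n => onesZeros n i k ≠ onesZeros n j k) =
      univ.filter (fun k : Fin n => k < j) \ univ.filter (fun k : Fin n => k < i) := by
    ext k
    simp only [onesZeros, mem_filter, mem_sdiff, mem_univ, true_and, ne_eq, decide_eq_decide]
    omega
  rw [hammingDist, hfilter, card_sdiff_of_subset, Fin.card_filter_val_lt, Fin.card_filter_val_lt]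
  · omega
  · exact fun k => by simp only [mem_filter, mem_univ, true_and]; omega

theorem card_paretoSet_le (n : ℕ) : #(paretoSet n) ≤ n + 1 :=
  card_image_le.trans (card_range _).le

theorem card_paretoSet_filter_hammingDist_le (n : ℕ) (x : Fin n → Bool) (d : ℕ) :
    #{z ∈ paretoSet n | hammingDist x z = d} ≤ 2 * d + 1 := by
  rw [paretoSet, filter_image]
  refine card_image_le.trans (card_le_succ_of_forall_le_add fun i hi j hj => ?_)
  simp only [mem_filter, mem_range] at hi hj
  rcases le_total i j with hij | hji
  · have := hammingDist_triangle_left (onesZeros n i) (onesZeros n j) x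
    rw [hammingDist_onesZeros hij (by omega), hi.2, hj.2] at this
    omega
  · omega

theorem card_paretoSet_filter_hammingDist_succ_le (m : ℕ) (x : Fin (m + 1) → Bool) {k : ℕ}
    (hk : k ≤ m) : #{z ∈ paretoSet (m + 1) | hammingDist x z = k + 1} ≤ 3 * m.choose k := by
  rcases Nat.eq_zero_or_pos k with rfl | hk0
  · simpa using card_paretoSet_filter_hammingDist_le (m + 1) x 1
  rcases hk.eq_or_lt with rfl | hkm
  · have := card_filter_hammingDist_eq_card_le_one (paretoSet (k + 1)) x
    rw [Nat.choose_self]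
    simp only [Fintype.card_fin] at this
    omega
  · have := (card_filter_le (paretoSet (m + 1)) (fun z => hammingDist x z = k + 1)).trans
      (card_paretoSet_le (m + 1))
    have := Nat.le_choose_of_pos_of_lt hk0 hkm
    omega

theorem sum_mutProb_eq_sum_card_mul (n : ℕ) (x : Fin n → Bool) (s : Finset (Fin n → Bool)) :
    ∑ z ∈ s, mutProb n x z = ∑ d ∈ range (n + 1),
      #{z ∈ s | hammingDist x z = d} * ((1 / (n : ℝ)) ^ d * (1 - 1 / (n : ℝ)) ^ (n - d)) := by
  simp only [mutProb, prod_ite_eq_pow_hammingDist, Fintype.card_fin]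
  rw [← sum_fiberwise_of_maps_to (t := range (n + 1)) (g := hammingDist x)
    fun z _ => mem_range.2 (Nat.lt_succ_of_le (hammingDist_le_card_fintype.trans_eq
      (Fintype.card_fin n)))]
  refine sum_congr rfl fun d _ => ?_
  rw [← nsmul_eq_mul, ← sum_const]
  exact sum_congr rfl fun z hz => by rw [(mem_filter.1 hz).2]

theorem sum_card_paretoSet_filter_hammingDist_succ_mul_le (m : ℕ) (x : Fin (m + 1) → Bool)
    {q : ℝ} (hq₀ : 0 ≤ q) (hq₁ : q ≤ 1) :
    ∑ k ∈ range (m + 1), (#{z ∈ paretoSet (m + 1) | hammingDist x z = k + 1} : ℝ) *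
      (q ^ (k + 1) * (1 - q) ^ (m + 1 - (k + 1))) ≤ 3 * q := by
  have hp : 0 ≤ 1 - q := sub_nonneg.2 hq₁
  calc _ ≤ ∑ k ∈ range (m + 1),
          ((3 * m.choose k : ℕ) : ℝ) * (q ^ (k + 1) * (1 - q) ^ (m - k)) :=
        sum_le_sum fun k hk => by
          rw [Nat.add_sub_add_right]
          gcongr
          exact card_paretoSet_filter_hammingDist_succ_le m x (Nat.lt_succ_iff.1 (mem_range.1 hk))
    _ = 3 * (q * (q + (1 - q)) ^ m) := by
        push_cast
        simp only [mul_assoc, ← mul_sum, sum_choose_mul_pow_succ]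
    _ = 3 * q := by simp

/-- The probability that standard bit mutation applied to `x` creates an offspring in the
Pareto set `F = {1^i 0^(n-i) : 0 ≤ i ≤ n}` of LOTZ is at most `1/e + 3/n` if `x ∈ F`
and at most `3/n` otherwise. -/
theorem prob_mutation_hits_paretoSet (n : ℕ) (hn : 1 ≤ n) (x : Fin n → Bool) :
    ∑ z ∈ paretoSet n, mutProb n x z ≤
      if x ∈ paretoSet n then 1 / Real.exp 1 + 3 / (n : ℝ) else 3 / (n : ℝ) := by
  obtain ⟨m, rfl⟩ : ∃ m, n = m + 1 := ⟨n - 1, by omega⟩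
  rw [sum_mutProb_eq_sum_card_mul, sum_range_succ']
  have hfar := sum_card_paretoSet_filter_hammingDist_succ_mul_le m x
    (q := 1 / ((m + 1 : ℕ) : ℝ)) (by positivity) (div_le_one_of_le₀ (by simp) (by positivity))
  have hexp : (1 - 1 / ((m + 1 : ℕ) : ℝ)) ^ (m + 1) ≤ 1 / Real.exp 1 := by
    simpa [Real.exp_neg] using Real.one_sub_div_pow_le_exp_neg (n := m + 1) (t := 1) (by simp)
  rw [mul_one_div] at hfar
  rw [card_filter_hammingDist_eq_zero]
  split_ifs <;> simp only [Nat.cast_one, Nat.cast_zero, pow_zero, Nat.sub_zero, one_mul,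
    zero_mul] <;> linarith
end

section
/- Let n ≥ 1, let F := {1^i 0^{n−i} : 0 ≤ i ≤ n} ⊆ {0,1}^n be the set of bit strings consisting of a prefix of i ones followed by n−i zeros, and let x ∈ {0,1}^n with x ∉ F. Then the set {z ∈ F : H(x,z) = 1} has at most two elements, where H(x,z) denotes the Hamming distance between x and z. -/
open Finset

section
variable {ι : Type*} [Fintype ι]

lemma hammingNorm_eq_sum_toNat (x : ι → Bool) : hammingNorm x = ∑ k, (x k).toNat := by
  rw [hammingNorm, card_filter]
  exact sum_congr rfl fun k _ => by cases x k <;> rfl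

lemma hammingNorm_succ_eq_or_of_hammingDist_eq_one [DecidableEq ι] {x y : ι → Bool}
    (h : hammingDist x y = 1) :
    hammingNorm x + 1 = hammingNorm y ∨ hammingNorm y + 1 = hammingNorm x := by
  obtain ⟨p, hp⟩ := card_eq_one.mp h
  have hdiff : ∀ k, x k ≠ y k ↔ k = p := fun k => by
    simpa using congrArg (k ∈ ·) hp
  have hagree : ∀ k ≠ p, x k = y k := fun k hk => not_not.mp (mt (hdiff k).mp hk)
  have hrest : ∑ k ∈ univ.erase p, (x k).toNat = ∑ k ∈ univ.erase p, (y k).toNat :=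
    sum_congr rfl fun k hk => by rw [hagree k (ne_of_mem_erase hk)]
  have hne : x p ≠ y p := (hdiff p).mpr rfl
  simp only [hammingNorm_eq_sum_toNat, ← add_sum_erase _ _ (mem_univ p), hrest]
  cases hxp : x p <;> cases hyp : y p <;> simp_all <;> omega
end

lemma hammingNorm_onesZeros {n i : ℕ} (hi : i ≤ n) : hammingNorm (onesZeros n i) = i := by
  simp only [hammingNorm, onesZeros]
  convert Fin.card_filter_val_lt (n := n) (m := i) using 2
  · ext k
    simp [show (0 : Bool) = false from rfl]
  · exact (min_eq_right hi).symm

theorem card_hammingDist_one_le_two_general (n : ℕ) (x : Fin n → Bool) :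
    ((paretoSet n).filter (fun z => hammingDist x z = 1)).card ≤ 2 := by
  set m := hammingNorm x
  calc _ ≤ ({onesZeros n (m - 1), onesZeros n (m + 1)} : Finset (Fin n → Bool)).card := by
        refine card_le_card fun z hz => ?_
        obtain ⟨⟨i, hi, rfl⟩, hd⟩ : (∃ i < n + 1, onesZeros n i = z) ∧ hammingDist x z = 1 := by
          simpa [paretoSet] using hz
        have hmi : m + 1 = i ∨ i + 1 = m := by
          simpa [hammingNorm_onesZeros (Nat.lt_succ_iff.mp hi)] using
            hammingNorm_succ_eq_or_of_hammingDist_eq_one hd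
        rcases hmi with rfl | hm
        · simp
        · simp [← hm]
    _ ≤ 2 := card_le_two

/-- For any `x ∉ F = {1^i 0^(n-i) : 0 ≤ i ≤ n}`, at most two elements of `F` are at
Hamming distance `1` from `x`. -/
theorem card_hammingDist_one_le_two (n : ℕ) (hn : 1 ≤ n) (x : Fin n → Bool)
    (hx : x ∉ paretoSet n) :
    ((paretoSet n).filter (fun z => hammingDist x z = 1)).card ≤ 2 :=
  card_hammingDist_one_le_two_general n x
end
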